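/- Let 2 ≤ r, 2 ≤ c, 2 ≤ v and max(r,c) ≤ v ≤ rc, and define the rationals e := rc/v, Λ_rc := ⌊e⌋ + ⌈e⌉ − ⌊e⌋⌈e⌉/e, Λ_rr := c(Λ_rc − 1)/(r − 1), Λ_cc := r(Λ_rc − 1)/(c − 1), μ := e(r + c − 2)/(v − 1). Set S_NTA := S(c(c−1)/2, Λ_cc) + S(r(r−1)/2, Λ_rr) + S(rc, Λ_rc) and S_NBG := S(v(v−1)/2, μ). Then: (a) if S_NTA < S_NBG, there is no (r × c, v)-near triple array; (b) if S_NTA > S_NBG, there is no (r × c, v)-near balanced grid; (c) if S_NTA = S_NBG, then a binary equireplicate or near equireplicate r × c row-column design on v symbols is an (r × c, v)-near triple array if and only if it is an (r × c, v)-near balanced grid. -/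
import Mathlib


open Finset

/-- An `r × c` row-column design on `v` symbols is binary if no symbol occurs
twice in any row or in any column. -/
def IsBinaryDesign {r c v : ℕ} (T : Fin r × Fin c → Fin v) : Prop :=
  (∀ (i : Fin r) (j j' : Fin c), j ≠ j' → T (i, j) ≠ T (i, j')) ∧
  (∀ (j : Fin c) (i i' : Fin r), i ≠ i' → T (i, j) ≠ T (i', j))

/-- The replication number of a symbol `s`: the number of cells containing `s`. -/
def replNum {r c v : ℕ} (T : Fin r × Fin c → Fin v) (s : Fin v) : ℕ :=
  (Finset.univ.filter (fun p : Fin r × Fin c => T p = s)).card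

/-- The average replication number `e = rc/v` as a rational number. -/
def avgRepl (r c v : ℕ) : ℚ := ((r : ℚ) * (c : ℚ)) / (v : ℚ)

/-- A design is equireplicate if `e = rc/v` is an integer and every symbol has
replication number `e`. -/
def IsEquireplicate {r c v : ℕ} (T : Fin r × Fin c → Fin v) : Prop :=
  (avgRepl r c v).den = 1 ∧ ∀ s : Fin v, (replNum T s : ℚ) = avgRepl r c v

/-- A design is near equireplicate if `e = rc/v` is not an integer and every symbol
has replication number `⌊e⌋` or `⌈e⌉`. -/
def IsNearEquireplicate {r c v : ℕ} (T : Fin r × Fin c → Fin v) : Prop :=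
  (avgRepl r c v).den ≠ 1 ∧
  ∀ s : Fin v, (replNum T s : ℤ) = ⌊avgRepl r c v⌋ ∨ (replNum T s : ℤ) = ⌈avgRepl r c v⌉

/-- The set of symbols occurring in row `i`. -/
def rowSet {r c v : ℕ} (T : Fin r × Fin c → Fin v) (i : Fin r) : Finset (Fin v) :=
  Finset.univ.image (fun j : Fin c => T (i, j))

/-- The set of symbols occurring in column `j`. -/
def colSet {r c v : ℕ} (T : Fin r × Fin c → Fin v) (j : Fin c) : Finset (Fin v) :=
  Finset.univ.image (fun i : Fin r => T (i, j))

/-- Average row-column intersection size `λ_rc`. -/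
def lamRC {r c v : ℕ} (T : Fin r × Fin c → Fin v) : ℚ :=
  (∑ i : Fin r, ∑ j : Fin c, ((rowSet T i ∩ colSet T j).card : ℚ)) / ((r : ℚ) * (c : ℚ))

/-- Average row-row intersection size `λ_rr`. -/
def lamRR {r c v : ℕ} (T : Fin r × Fin c → Fin v) : ℚ :=
  (∑ p ∈ Finset.univ.filter (fun p : Fin r × Fin r => p.1 < p.2),
      ((rowSet T p.1 ∩ rowSet T p.2).card : ℚ)) / ((r : ℚ) * ((r : ℚ) - 1) / 2)

/-- Average column-column intersection size `λ_cc`. -/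
def lamCC {r c v : ℕ} (T : Fin r × Fin c → Fin v) : ℚ :=
  (∑ p ∈ Finset.univ.filter (fun p : Fin c × Fin c => p.1 < p.2),
      ((colSet T p.1 ∩ colSet T p.2).card : ℚ)) / ((c : ℚ) * ((c : ℚ) - 1) / 2)

/-- An `(r × c, v)`-near triple array. -/
def IsNearTripleArray {r c v : ℕ} (T : Fin r × Fin c → Fin v) : Prop :=
  IsBinaryDesign T ∧ (IsEquireplicate T ∨ IsNearEquireplicate T) ∧
  (∀ (i : Fin r) (j : Fin c),
    ((rowSet T i ∩ colSet T j).card : ℤ) = ⌊lamRC T⌋ ∨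
    ((rowSet T i ∩ colSet T j).card : ℤ) = ⌈lamRC T⌉) ∧
  (∀ i j : Fin r, i ≠ j →
    ((rowSet T i ∩ rowSet T j).card : ℤ) = ⌊lamRR T⌋ ∨
    ((rowSet T i ∩ rowSet T j).card : ℤ) = ⌈lamRR T⌉) ∧
  (∀ i j : Fin c, i ≠ j →
    ((colSet T i ∩ colSet T j).card : ℤ) = ⌊lamCC T⌋ ∨
    ((colSet T i ∩ colSet T j).card : ℤ) = ⌈lamCC T⌉)

/-- `S(n, m) = n·m(m−1)/2 + n·(m − ⌊m⌋)(⌈m⌉ − m)/2`. -/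
def Sfun (n : ℕ) (m : ℚ) : ℚ :=
  (n : ℚ) * (m * (m - 1)) / 2 + (n : ℚ) * ((m - (⌊m⌋ : ℚ)) * ((⌈m⌉ : ℚ) - m)) / 2

/-- The number of rows containing both symbols `a` and `b`. -/
def rowPairCount {r c v : ℕ} (T : Fin r × Fin c → Fin v) (a b : Fin v) : ℕ :=
  (Finset.univ.filter (fun i : Fin r => a ∈ rowSet T i ∧ b ∈ rowSet T i)).card

/-- The number of columns containing both symbols `a` and `b`. -/
def colPairCount {r c v : ℕ} (T : Fin r × Fin c → Fin v) (a b : Fin v) : ℕ :=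
  (Finset.univ.filter (fun j : Fin c => a ∈ colSet T j ∧ b ∈ colSet T j)).card

/-- The average covering number `μ = e(r + c − 2)/(v − 1)`. -/
def muGrid (r c v : ℕ) : ℚ :=
  avgRepl r c v * ((r : ℚ) + (c : ℚ) - 2) / ((v : ℚ) - 1)

/-- An `(r × c, v)`-near balanced grid. -/
def IsNearBalancedGrid {r c v : ℕ} (T : Fin r × Fin c → Fin v) : Prop :=
  IsBinaryDesign T ∧ (IsEquireplicate T ∨ IsNearEquireplicate T) ∧
  ∀ a b : Fin v, a ≠ b →
    ((rowPairCount T a b + colPairCount T a b : ℤ) = ⌊muGrid r c v⌋ ∨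
     (rowPairCount T a b + colPairCount T a b : ℤ) = ⌈muGrid r c v⌉)


lemma aux_card_as_sum {α : Type*} [Fintype α] [DecidableEq α] (S : Finset α) :
    (S.card : ℚ) = ∑ a : α, if a ∈ S then (1:ℚ) else 0 := by
  rw [Finset.sum_boole]
  congr 1
  simp [Finset.filter_mem_eq_inter]

lemma aux_offdiag_split {ι : Type*} [Fintype ι] [DecidableEq ι] (φ : ι → ι → ℚ) :
    ∑ p ∈ (univ : Finset ι).offDiag, φ p.1 p.2
      = (∑ i : ι, ∑ j : ι, φ i j) - ∑ i : ι, φ i i := by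
  have h1 : ∑ p ∈ (univ : Finset ι).diag, φ p.1 p.2 + ∑ p ∈ (univ : Finset ι).offDiag, φ p.1 p.2
      = ∑ i : ι, ∑ j : ι, φ i j := by
    rw [← Finset.sum_union (Finset.disjoint_diag_offDiag _), Finset.diag_union_offDiag,
      Finset.univ_product_univ]
    rw [show (univ : Finset (ι × ι)) = univ ×ˢ univ from Finset.univ_product_univ.symm,
      Finset.sum_product]
  have h2 : ∑ p ∈ (univ : Finset ι).diag, φ p.1 p.2 = ∑ i : ι, φ i i := by
    rw [Finset.sum_diag]
  linarith
lemma aux_E {α : Type*} [Fintype α] [DecidableEq α] (f : α → ℚ)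
    (hf : ∀ a, f a * f a = f a) :
    ∑ p ∈ (univ : Finset α).offDiag, f p.1 * f p.2
      = (∑ a : α, f a) ^ 2 - ∑ a : α, f a := by
  rw [aux_offdiag_split (fun a b => f a * f b)]
  rw [sq, Finset.sum_mul_sum]
  simp [hf]

lemma aux_convex {ι : Type*} (K : Finset ι) (x : ι → ℕ) (m : ℚ)
    (h : ∑ k ∈ K, (x k : ℚ) = K.card * m) :
    ∑ k ∈ K, ((x k : ℚ) ^ 2 - (x k : ℚ))
      = 2 * Sfun K.card m + ∑ k ∈ K, ((x k : ℚ) - (⌊m⌋ : ℚ)) * ((x k : ℚ) - (⌈m⌉ : ℚ)) := by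
  have pt : ∀ k ∈ K, ((x k : ℚ) ^ 2 - (x k : ℚ)) =
      ((x k : ℚ) - (⌊m⌋ : ℚ)) * ((x k : ℚ) - (⌈m⌉ : ℚ))
        + (((⌊m⌋:ℚ) + (⌈m⌉:ℚ) - 1) * (x k : ℚ) - (⌊m⌋:ℚ) * (⌈m⌉:ℚ)) := by
    intro k _; ring
  rw [Finset.sum_congr rfl pt, Finset.sum_add_distrib, Finset.sum_sub_distrib,
    ← Finset.mul_sum, h, Finset.sum_const, nsmul_eq_mul]
  unfold Sfun; ring

lemma aux_g_nonneg (x : ℕ) (m : ℚ) :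
    0 ≤ ((x : ℚ) - (⌊m⌋ : ℚ)) * ((x : ℚ) - (⌈m⌉ : ℚ)) := by
  rcases le_or_gt (x : ℤ) ⌊m⌋ with h | h
  · have h1 : (x : ℚ) ≤ (⌊m⌋ : ℚ) := by exact_mod_cast h
    have h2 : (x : ℚ) ≤ (⌈m⌉ : ℚ) := by
      have := Int.floor_le_ceil m
      have : (⌊m⌋ : ℚ) ≤ (⌈m⌉ : ℚ) := by exact_mod_cast this
      linarith
    nlinarith
  · have h' : ⌈m⌉ ≤ (x : ℤ) := le_trans (Int.ceil_le_floor_add_one m) (by omega)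
    have h1 : (⌊m⌋ : ℚ) ≤ (x : ℚ) := by exact_mod_cast h.le
    have h2 : (⌈m⌉ : ℚ) ≤ (x : ℚ) := by exact_mod_cast h'
    nlinarith

lemma aux_g_zero_iff (x : ℕ) (m : ℚ) :
    ((x : ℚ) - (⌊m⌋ : ℚ)) * ((x : ℚ) - (⌈m⌉ : ℚ)) = 0 ↔
      ((x : ℤ) = ⌊m⌋ ∨ (x : ℤ) = ⌈m⌉) := by
  rw [mul_eq_zero, sub_eq_zero, sub_eq_zero]
  constructor
  · rintro (h | h) <;> [left; right] <;> exact_mod_cast h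
  · rintro (h | h) <;> [left; right] <;> exact_mod_cast h

section Aux2
open Finset
variable {r c v : ℕ}

lemma ite_mem_inter {α : Type*} [DecidableEq α] (S S' : Finset α) (a : α) :
    (if a ∈ S ∩ S' then (1:ℚ) else 0)
      = (if a ∈ S then (1:ℚ) else 0) * (if a ∈ S' then (1:ℚ) else 0) := by
  by_cases h1 : a ∈ S <;> by_cases h2 : a ∈ S' <;> simp [Finset.mem_inter, h1, h2]

lemma binary_rowSet_card (T : Fin r × Fin c → Fin v) (hb : IsBinaryDesign T) (i : Fin r) :
    (rowSet T i).card = c := by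
  rw [rowSet, Finset.card_image_of_injective _ (fun j j' h => by
    by_contra hne; exact hb.1 i j j' hne h), Finset.card_univ, Fintype.card_fin]

lemma binary_colSet_card (T : Fin r × Fin c → Fin v) (hb : IsBinaryDesign T) (j : Fin c) :
    (colSet T j).card = r := by
  rw [colSet, Finset.card_image_of_injective _ (fun i i' h => by
    by_contra hne; exact hb.2 j i i' hne h), Finset.card_univ, Fintype.card_fin]

lemma binary_replNum_rows (T : Fin r × Fin c → Fin v) (hb : IsBinaryDesign T) (s : Fin v) :
    replNum T s = (univ.filter (fun i : Fin r => s ∈ rowSet T i)).card := by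
  apply Finset.card_bij (fun p _ => p.1)
  · rintro ⟨i, j⟩ hp
    simp only [Finset.mem_filter, Finset.mem_univ, true_and] at hp ⊢
    exact Finset.mem_image.2 ⟨j, Finset.mem_univ _, hp⟩
  · rintro ⟨i, j⟩ hp ⟨i', j'⟩ hq h
    simp only [Finset.mem_filter, Finset.mem_univ, true_and] at hp hq
    simp only at h
    subst h
    by_contra hne
    have : j ≠ j' := by simpa using hne
    exact hb.1 i j j' this (hp.trans hq.symm)
  · intro i hi
    simp only [Finset.mem_filter, Finset.mem_univ, true_and, rowSet, Finset.mem_image] at hi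
    obtain ⟨j, _, hj⟩ := hi
    exact ⟨(i, j), by simpa [replNum] using hj, rfl⟩

lemma binary_replNum_cols (T : Fin r × Fin c → Fin v) (hb : IsBinaryDesign T) (s : Fin v) :
    replNum T s = (univ.filter (fun j : Fin c => s ∈ colSet T j)).card := by
  apply Finset.card_bij (fun p _ => p.2)
  · rintro ⟨i, j⟩ hp
    simp only [Finset.mem_filter, Finset.mem_univ, true_and] at hp ⊢
    exact Finset.mem_image.2 ⟨i, Finset.mem_univ _, hp⟩
  · rintro ⟨i, j⟩ hp ⟨i', j'⟩ hq h
    simp only [Finset.mem_filter, Finset.mem_univ, true_and] at hp hq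
    simp only at h
    subst h
    by_contra hne
    have : i ≠ i' := by simpa using hne
    exact hb.2 j i i' this (hp.trans hq.symm)
  · intro j hj
    simp only [Finset.mem_filter, Finset.mem_univ, true_and, colSet, Finset.mem_image] at hj
    obtain ⟨i, _, hi⟩ := hj
    exact ⟨(i, j), by simpa [replNum] using hi, rfl⟩

lemma sum_replNum (T : Fin r × Fin c → Fin v) :
    ∑ s : Fin v, replNum T s = r * c := by
  have := Finset.card_eq_sum_card_fiberwise
    (f := T) (s := (univ : Finset (Fin r × Fin c))) (t := univ) (fun x _ => Finset.mem_univ _)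
  rw [Finset.card_univ] at this
  simp only [replNum]
  rw [← this]
  simp [Fintype.card_prod]

lemma rowcount_as_sum (T : Fin r × Fin c → Fin v) (s : Fin v) :
    ∑ i : Fin r, (if s ∈ rowSet T i then (1:ℚ) else 0)
      = ((univ.filter (fun i : Fin r => s ∈ rowSet T i)).card : ℚ) :=
  Finset.sum_boole _ _

lemma colcount_as_sum (T : Fin r × Fin c → Fin v) (s : Fin v) :
    ∑ j : Fin c, (if s ∈ colSet T j then (1:ℚ) else 0)
      = ((univ.filter (fun j : Fin c => s ∈ colSet T j)).card : ℚ) :=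
  Finset.sum_boole _ _

end Aux2

section Aux3
open Finset
variable {r c v : ℕ}

lemma ite_and_mul (P Q : Prop) [Decidable P] [Decidable Q] :
    (if P ∧ Q then (1:ℚ) else 0) = (if P then (1:ℚ) else 0) * (if Q then (1:ℚ) else 0) := by
  by_cases hP : P <;> by_cases hQ : Q <;> simp [hP, hQ]

lemma card_inter_as_sum {α : Type*} [Fintype α] [DecidableEq α] (S S' : Finset α) :
    ((S ∩ S').card : ℚ)
      = ∑ a : α, (if a ∈ S then (1:ℚ) else 0) * (if a ∈ S' then (1:ℚ) else 0) := by
  rw [aux_card_as_sum]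
  exact Finset.sum_congr rfl fun a _ => ite_mem_inter S S' a

lemma aux_h1 {α : Type*} [Fintype α] [DecidableEq α] (S : Finset α) :
    ∑ p ∈ (univ : Finset α).offDiag,
        (if p.1 ∈ S then (1:ℚ) else 0) * (if p.2 ∈ S then (1:ℚ) else 0)
      = (S.card : ℚ)^2 - S.card := by
  rw [aux_E (fun a => if a ∈ S then (1:ℚ) else 0) (fun a => by by_cases h : a ∈ S <;> simp [h]),
    ← aux_card_as_sum]

lemma aux_h2 {α : Type*} [Fintype α] [DecidableEq α] (S S' : Finset α) :
    ∑ p ∈ (univ : Finset α).offDiag,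
        ((if p.1 ∈ S then (1:ℚ) else 0) * (if p.2 ∈ S then (1:ℚ) else 0)) *
        ((if p.1 ∈ S' then (1:ℚ) else 0) * (if p.2 ∈ S' then (1:ℚ) else 0))
      = ((S ∩ S').card : ℚ)^2 - ((S ∩ S').card : ℚ) := by
  have key : ∀ p : α × α,
      ((if p.1 ∈ S then (1:ℚ) else 0) * (if p.2 ∈ S then (1:ℚ) else 0)) *
      ((if p.1 ∈ S' then (1:ℚ) else 0) * (if p.2 ∈ S' then (1:ℚ) else 0))
        = (if p.1 ∈ S ∩ S' then (1:ℚ) else 0) * (if p.2 ∈ S ∩ S' then (1:ℚ) else 0) := by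
    intro p; rw [ite_mem_inter, ite_mem_inter]; ring
  rw [Finset.sum_congr rfl fun p _ => key p]
  exact aux_h1 (S ∩ S')

lemma sum_inter_rc (T : Fin r × Fin c → Fin v) (hb : IsBinaryDesign T) :
    ∑ i : Fin r, ∑ j : Fin c, ((rowSet T i ∩ colSet T j).card : ℚ)
      = ∑ s : Fin v, (replNum T s : ℚ)^2 := by
  have : ∀ i j, ((rowSet T i ∩ colSet T j).card : ℚ)
      = ∑ s : Fin v, (if s ∈ rowSet T i then (1:ℚ) else 0) * (if s ∈ colSet T j then (1:ℚ) else 0) :=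
    fun i j => card_inter_as_sum _ _
  calc ∑ i : Fin r, ∑ j : Fin c, ((rowSet T i ∩ colSet T j).card : ℚ)
      = ∑ i : Fin r, ∑ j : Fin c, ∑ s : Fin v,
          (if s ∈ rowSet T i then (1:ℚ) else 0) * (if s ∈ colSet T j then (1:ℚ) else 0) := by
        exact Finset.sum_congr rfl fun i _ => Finset.sum_congr rfl fun j _ => this i j
    _ = ∑ i : Fin r, ∑ s : Fin v, ∑ j : Fin c,
          (if s ∈ rowSet T i then (1:ℚ) else 0) * (if s ∈ colSet T j then (1:ℚ) else 0) :=
        Finset.sum_congr rfl fun i _ => Finset.sum_comm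
    _ = ∑ s : Fin v, ∑ i : Fin r, ∑ j : Fin c,
          (if s ∈ rowSet T i then (1:ℚ) else 0) * (if s ∈ colSet T j then (1:ℚ) else 0) :=
        Finset.sum_comm
    _ = ∑ s : Fin v, (replNum T s : ℚ)^2 := by
        refine Finset.sum_congr rfl fun s _ => ?_
        rw [← Finset.sum_mul_sum, rowcount_as_sum, colcount_as_sum,
          ← binary_replNum_rows T hb s, ← binary_replNum_cols T hb s, sq]

lemma sum_inter_rr (T : Fin r × Fin c → Fin v) (hb : IsBinaryDesign T) :
    ∑ p ∈ (univ : Finset (Fin r)).offDiag, ((rowSet T p.1 ∩ rowSet T p.2).card : ℚ)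
      = ∑ s : Fin v, ((replNum T s : ℚ)^2 - (replNum T s : ℚ)) := by
  have : ∀ p : Fin r × Fin r, ((rowSet T p.1 ∩ rowSet T p.2).card : ℚ)
      = ∑ s : Fin v, (if s ∈ rowSet T p.1 then (1:ℚ) else 0) * (if s ∈ rowSet T p.2 then (1:ℚ) else 0) :=
    fun p => card_inter_as_sum _ _
  rw [Finset.sum_congr rfl fun p _ => this p, Finset.sum_comm]
  refine Finset.sum_congr rfl fun s _ => ?_
  rw [aux_E (fun i => if s ∈ rowSet T i then (1:ℚ) else 0)
    (fun i => by by_cases h : s ∈ rowSet T i <;> simp [h]), rowcount_as_sum,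
    ← binary_replNum_rows T hb s]

lemma sum_inter_cc (T : Fin r × Fin c → Fin v) (hb : IsBinaryDesign T) :
    ∑ p ∈ (univ : Finset (Fin c)).offDiag, ((colSet T p.1 ∩ colSet T p.2).card : ℚ)
      = ∑ s : Fin v, ((replNum T s : ℚ)^2 - (replNum T s : ℚ)) := by
  have : ∀ p : Fin c × Fin c, ((colSet T p.1 ∩ colSet T p.2).card : ℚ)
      = ∑ s : Fin v, (if s ∈ colSet T p.1 then (1:ℚ) else 0) * (if s ∈ colSet T p.2 then (1:ℚ) else 0) :=
    fun p => card_inter_as_sum _ _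
  rw [Finset.sum_congr rfl fun p _ => this p, Finset.sum_comm]
  refine Finset.sum_congr rfl fun s _ => ?_
  rw [aux_E (fun j => if s ∈ colSet T j then (1:ℚ) else 0)
    (fun j => by by_cases h : s ∈ colSet T j <;> simp [h]), colcount_as_sum,
    ← binary_replNum_cols T hb s]

end Aux3

section Aux4
open Finset
variable {r c v : ℕ}

lemma aux_biggen {ι α : Type*} [Fintype ι] [Fintype α] [DecidableEq α] (A : ι → Finset α) :
    ∑ p ∈ (univ : Finset α).offDiag,
        ((∑ L : ι, (if p.1 ∈ A L then (1:ℚ) else 0) * (if p.2 ∈ A L then (1:ℚ) else 0))^2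
          - ∑ L : ι, (if p.1 ∈ A L then (1:ℚ) else 0) * (if p.2 ∈ A L then (1:ℚ) else 0))
      = (∑ L : ι, ∑ L' : ι, (((A L ∩ A L').card : ℚ)^2 - ((A L ∩ A L').card : ℚ)))
        - ∑ L : ι, (((A L).card : ℚ)^2 - ((A L).card : ℚ)) := by
  rw [Finset.sum_sub_distrib]
  have h2 : ∑ p ∈ (univ : Finset α).offDiag,
      ∑ L : ι, (if p.1 ∈ A L then (1:ℚ) else 0) * (if p.2 ∈ A L then (1:ℚ) else 0)
      = ∑ L : ι, (((A L).card : ℚ)^2 - ((A L).card : ℚ)) := by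
    rw [Finset.sum_comm]
    exact Finset.sum_congr rfl fun L _ => aux_h1 (A L)
  have h1 : ∑ p ∈ (univ : Finset α).offDiag,
      (∑ L : ι, (if p.1 ∈ A L then (1:ℚ) else 0) * (if p.2 ∈ A L then (1:ℚ) else 0))^2
      = ∑ L : ι, ∑ L' : ι, (((A L ∩ A L').card : ℚ)^2 - ((A L ∩ A L').card : ℚ)) := by
    have expand : ∀ p : α × α,
        (∑ L : ι, (if p.1 ∈ A L then (1:ℚ) else 0) * (if p.2 ∈ A L then (1:ℚ) else 0))^2
        = ∑ L : ι, ∑ L' : ι,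
            ((if p.1 ∈ A L then (1:ℚ) else 0) * (if p.2 ∈ A L then (1:ℚ) else 0)) *
            ((if p.1 ∈ A L' then (1:ℚ) else 0) * (if p.2 ∈ A L' then (1:ℚ) else 0)) := by
      intro p; rw [sq, Finset.sum_mul_sum]
    calc ∑ p ∈ (univ : Finset α).offDiag,
        (∑ L : ι, (if p.1 ∈ A L then (1:ℚ) else 0) * (if p.2 ∈ A L then (1:ℚ) else 0))^2
        = ∑ p ∈ (univ : Finset α).offDiag, ∑ L : ι, ∑ L' : ι,
            ((if p.1 ∈ A L then (1:ℚ) else 0) * (if p.2 ∈ A L then (1:ℚ) else 0)) *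
            ((if p.1 ∈ A L' then (1:ℚ) else 0) * (if p.2 ∈ A L' then (1:ℚ) else 0)) :=
          Finset.sum_congr rfl fun p _ => expand p
      _ = ∑ L : ι, ∑ p ∈ (univ : Finset α).offDiag, ∑ L' : ι,
            ((if p.1 ∈ A L then (1:ℚ) else 0) * (if p.2 ∈ A L then (1:ℚ) else 0)) *
            ((if p.1 ∈ A L' then (1:ℚ) else 0) * (if p.2 ∈ A L' then (1:ℚ) else 0)) :=
          Finset.sum_comm
      _ = ∑ L : ι, ∑ L' : ι, ∑ p ∈ (univ : Finset α).offDiag,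
            ((if p.1 ∈ A L then (1:ℚ) else 0) * (if p.2 ∈ A L then (1:ℚ) else 0)) *
            ((if p.1 ∈ A L' then (1:ℚ) else 0) * (if p.2 ∈ A L' then (1:ℚ) else 0)) :=
          Finset.sum_congr rfl fun L _ => Finset.sum_comm
      _ = ∑ L : ι, ∑ L' : ι, (((A L ∩ A L').card : ℚ)^2 - ((A L ∩ A L').card : ℚ)) :=
          Finset.sum_congr rfl fun L _ => Finset.sum_congr rfl fun L' _ => aux_h2 (A L) (A L')
  rw [h1, h2]

lemma pairCount_as_sum (T : Fin r × Fin c → Fin v) (a b : Fin v) :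
    ((rowPairCount T a b + colPairCount T a b : ℕ) : ℚ)
      = ∑ L : Fin r ⊕ Fin c,
          (if a ∈ Sum.elim (rowSet T) (colSet T) L then (1:ℚ) else 0) *
          (if b ∈ Sum.elim (rowSet T) (colSet T) L then (1:ℚ) else 0) := by
  rw [Fintype.sum_sum_type]
  push_cast
  congr 1
  · rw [rowPairCount, ← Finset.sum_boole]
    exact Finset.sum_congr rfl fun i _ => ite_and_mul _ _
  · rw [colPairCount, ← Finset.sum_boole]
    exact Finset.sum_congr rfl fun j _ => ite_and_mul _ _

lemma big_identity (T : Fin r × Fin c → Fin v) :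
    ∑ p ∈ (univ : Finset (Fin v)).offDiag,
        (((rowPairCount T p.1 p.2 + colPairCount T p.1 p.2 : ℕ) : ℚ)^2
          - ((rowPairCount T p.1 p.2 + colPairCount T p.1 p.2 : ℕ) : ℚ))
      = (∑ p ∈ (univ : Finset (Fin r)).offDiag,
          (((rowSet T p.1 ∩ rowSet T p.2).card : ℚ)^2 - ((rowSet T p.1 ∩ rowSet T p.2).card : ℚ)))
        + (∑ p ∈ (univ : Finset (Fin c)).offDiag,
          (((colSet T p.1 ∩ colSet T p.2).card : ℚ)^2 - ((colSet T p.1 ∩ colSet T p.2).card : ℚ)))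
        + 2 * ∑ i : Fin r, ∑ j : Fin c,
          (((rowSet T i ∩ colSet T j).card : ℚ)^2 - ((rowSet T i ∩ colSet T j).card : ℚ)) := by
  have lhs_eq : ∑ p ∈ (univ : Finset (Fin v)).offDiag,
        (((rowPairCount T p.1 p.2 + colPairCount T p.1 p.2 : ℕ) : ℚ)^2
          - ((rowPairCount T p.1 p.2 + colPairCount T p.1 p.2 : ℕ) : ℚ))
      = (∑ L : Fin r ⊕ Fin c, ∑ L' : Fin r ⊕ Fin c,
          (((Sum.elim (rowSet T) (colSet T) L ∩ Sum.elim (rowSet T) (colSet T) L').card : ℚ)^2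
            - ((Sum.elim (rowSet T) (colSet T) L ∩ Sum.elim (rowSet T) (colSet T) L').card : ℚ)))
        - ∑ L : Fin r ⊕ Fin c, (((Sum.elim (rowSet T) (colSet T) L).card : ℚ)^2
            - ((Sum.elim (rowSet T) (colSet T) L).card : ℚ)) := by
    rw [← aux_biggen (Sum.elim (rowSet T) (colSet T))]
    exact Finset.sum_congr rfl fun p _ => by rw [pairCount_as_sum]
  rw [lhs_eq]
  -- abbreviations
  set QRR : Fin r → Fin r → ℚ := fun i i' =>
    ((rowSet T i ∩ rowSet T i').card : ℚ)^2 - ((rowSet T i ∩ rowSet T i').card : ℚ) with hQRR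
  set QCC : Fin c → Fin c → ℚ := fun j j' =>
    ((colSet T j ∩ colSet T j').card : ℚ)^2 - ((colSet T j ∩ colSet T j').card : ℚ) with hQCC
  set QRC : Fin r → Fin c → ℚ := fun i j =>
    ((rowSet T i ∩ colSet T j).card : ℚ)^2 - ((rowSet T i ∩ colSet T j).card : ℚ) with hQRC
  have hsplit2 : ∑ L : Fin r ⊕ Fin c, ∑ L' : Fin r ⊕ Fin c,
      (((Sum.elim (rowSet T) (colSet T) L ∩ Sum.elim (rowSet T) (colSet T) L').card : ℚ)^2
        - ((Sum.elim (rowSet T) (colSet T) L ∩ Sum.elim (rowSet T) (colSet T) L').card : ℚ))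
      = (∑ i, ∑ i', QRR i i') + (∑ j, ∑ j', QCC j j') + 2 * ∑ i, ∑ j, QRC i j := by
    rw [Fintype.sum_sum_type]
    have e1 : ∀ i : Fin r, ∑ L' : Fin r ⊕ Fin c,
        (((rowSet T i ∩ Sum.elim (rowSet T) (colSet T) L').card : ℚ)^2
          - ((rowSet T i ∩ Sum.elim (rowSet T) (colSet T) L').card : ℚ))
        = (∑ i', QRR i i') + ∑ j, QRC i j := fun i => by
      rw [Fintype.sum_sum_type]; rfl
    have e2 : ∀ j : Fin c, ∑ L' : Fin r ⊕ Fin c,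
        (((colSet T j ∩ Sum.elim (rowSet T) (colSet T) L').card : ℚ)^2
          - ((colSet T j ∩ Sum.elim (rowSet T) (colSet T) L').card : ℚ))
        = (∑ i, QRC i j) + ∑ j', QCC j j' := fun j => by
      rw [Fintype.sum_sum_type]
      congr 1
      exact Finset.sum_congr rfl fun i _ => by
        simp only [QRC, Sum.elim_inl, Finset.inter_comm]
    simp only [Sum.elim_inl, Sum.elim_inr]
    rw [Finset.sum_congr rfl fun i _ => e1 i, Finset.sum_congr rfl fun j _ => e2 j,
      Finset.sum_add_distrib, Finset.sum_add_distrib]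
    rw [Finset.sum_comm (f := fun j i => QRC i j)]
    ring
  have hsplit1 : ∑ L : Fin r ⊕ Fin c, (((Sum.elim (rowSet T) (colSet T) L).card : ℚ)^2
        - ((Sum.elim (rowSet T) (colSet T) L).card : ℚ))
      = (∑ i, QRR i i) + ∑ j, QCC j j := by
    rw [Fintype.sum_sum_type]
    simp [QRR, QCC, Finset.inter_self]
  have hdr : ∑ i, ∑ i', QRR i i'
      = (∑ p ∈ (univ : Finset (Fin r)).offDiag, QRR p.1 p.2) + ∑ i, QRR i i := by
    rw [aux_offdiag_split QRR]; ring
  have hdc : ∑ j, ∑ j', QCC j j'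
      = (∑ p ∈ (univ : Finset (Fin c)).offDiag, QCC p.1 p.2) + ∑ j, QCC j j := by
    rw [aux_offdiag_split QCC]; ring
  rw [hsplit2, hsplit1, hdr, hdc]
  ring

lemma sum_pairCounts (T : Fin r × Fin c → Fin v) (hb : IsBinaryDesign T) :
    ∑ p ∈ (univ : Finset (Fin v)).offDiag,
        ((rowPairCount T p.1 p.2 + colPairCount T p.1 p.2 : ℕ) : ℚ)
      = (r : ℚ) * ((c:ℚ)^2 - c) + (c : ℚ) * ((r:ℚ)^2 - r) := by
  have : ∀ p : Fin v × Fin v, ((rowPairCount T p.1 p.2 + colPairCount T p.1 p.2 : ℕ) : ℚ)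
      = (∑ i : Fin r, (if p.1 ∈ rowSet T i then (1:ℚ) else 0) * (if p.2 ∈ rowSet T i then (1:ℚ) else 0))
        + ∑ j : Fin c, (if p.1 ∈ colSet T j then (1:ℚ) else 0) * (if p.2 ∈ colSet T j then (1:ℚ) else 0) := by
    intro p; rw [pairCount_as_sum, Fintype.sum_sum_type]; rfl
  rw [Finset.sum_congr rfl fun p _ => this p, Finset.sum_add_distrib, Finset.sum_comm,
    Finset.sum_comm (f := fun (p : Fin v × Fin v) (j : Fin c) =>
      (if p.1 ∈ colSet T j then (1:ℚ) else 0) * (if p.2 ∈ colSet T j then (1:ℚ) else 0))]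
  rw [Finset.sum_congr rfl fun i (_ : i ∈ univ) => aux_h1 (rowSet T i),
    Finset.sum_congr rfl fun j (_ : j ∈ univ) => aux_h1 (colSet T j)]
  simp only [binary_rowSet_card T hb, binary_colSet_card T hb]
  rw [Finset.sum_const, Finset.sum_const]
  simp [Finset.card_univ, nsmul_eq_mul]

end Aux4

section Aux5
open Finset
variable {r c v : ℕ}

lemma offDiag_sum_sym {ι : Type*} [Fintype ι] [DecidableEq ι] [LinearOrder ι] (f : ι × ι → ℚ)
    (hsym : ∀ p : ι × ι, f (p.2, p.1) = f p) :
    ∑ p ∈ (univ : Finset ι).offDiag, f p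
      = 2 * ∑ p ∈ univ.filter (fun p : ι × ι => p.1 < p.2), f p := by
  have hunion : (univ : Finset ι).offDiag
      = univ.filter (fun p : ι × ι => p.1 < p.2) ∪ univ.filter (fun p : ι × ι => p.2 < p.1) := by
    ext p
    simp only [Finset.mem_offDiag, Finset.mem_union, Finset.mem_filter, Finset.mem_univ,
      true_and, ne_eq]
    constructor
    · rintro h; rcases lt_or_gt_of_ne h with h' | h'
      · exact Or.inl h'
      · exact Or.inr h'
    · rintro (h | h)
      · exact ne_of_lt h
      · exact (ne_of_lt h).symm
  have hdisj : Disjoint (univ.filter (fun p : ι × ι => p.1 < p.2))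
      (univ.filter (fun p : ι × ι => p.2 < p.1)) := by
    rw [Finset.disjoint_left]
    intro p hp hq
    simp only [Finset.mem_filter] at hp hq
    exact absurd hq.2 (lt_asymm hp.2)
  rw [hunion, Finset.sum_union hdisj]
  have hswap : ∑ p ∈ univ.filter (fun p : ι × ι => p.2 < p.1), f p
      = ∑ p ∈ univ.filter (fun p : ι × ι => p.1 < p.2), f p := by
    apply Finset.sum_nbij' (i := Prod.swap) (j := Prod.swap)
    · intro a ha; simp only [Finset.mem_filter, Finset.mem_univ, true_and] at ha ⊢; exact ha
    · intro a ha; simp only [Finset.mem_filter, Finset.mem_univ, true_and] at ha ⊢; exact ha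
    · intro a _; simp
    · intro a _; simp
    · intro a _; exact (hsym a).symm
  rw [hswap]; ring

lemma repl_g_zero (T : Fin r × Fin c → Fin v)
    (hrep : IsEquireplicate T ∨ IsNearEquireplicate T) (s : Fin v) :
    ((replNum T s : ℚ) - (⌊avgRepl r c v⌋ : ℚ)) * ((replNum T s : ℚ) - (⌈avgRepl r c v⌉ : ℚ)) = 0 := by
  rcases hrep with ⟨hden, heq⟩ | ⟨_, h⟩
  · have hfl : (⌊avgRepl r c v⌋ : ℚ) = avgRepl r c v := by
      have h1 : ((avgRepl r c v).num : ℚ) = avgRepl r c v := by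
        conv_rhs => rw [← Rat.num_div_den (avgRepl r c v)]
        rw [hden]; simp
      rw [← h1, Int.floor_intCast]
    apply mul_eq_zero_of_left
    rw [hfl, heq s, sub_self]
  · rcases h s with h' | h'
    · apply mul_eq_zero_of_left
      rw [sub_eq_zero]; exact_mod_cast h'
    · apply mul_eq_zero_of_right
      rw [sub_eq_zero]; exact_mod_cast h'

lemma Sfun_double (n k : ℕ) (h : (n : ℚ) = 2 * (k : ℚ)) (m : ℚ) :
    Sfun n m = 2 * Sfun k m := by
  unfold Sfun; rw [h]; ring

lemma half_card_cast (n : ℕ) (hn : 1 ≤ n) : ((n * (n - 1) / 2 : ℕ) : ℚ) = (n : ℚ) * ((n : ℚ) - 1) / 2 := by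
  have h2 : 2 ∣ n * (n - 1) := by
    have he : Even ((n - 1) * n) := by
      have := Nat.even_mul_succ_self (n - 1)
      rwa [Nat.sub_add_cancel hn] at this
    rw [mul_comm]; exact he.two_dvd
  rw [Nat.cast_div h2 (by norm_num)]
  push_cast [Nat.cast_sub hn]
  ring

end Aux5

section Aux6
open Finset

lemma main_key {r c v : ℕ} (hr : 2 ≤ r) (hc : 2 ≤ c) (hv0 : 2 ≤ v)
    (e Lrc Lrr Lcc μ : ℚ)
    (he : e = avgRepl r c v)
    (hLrc : Lrc = (⌊e⌋ : ℚ) + (⌈e⌉ : ℚ) - (⌊e⌋ : ℚ) * (⌈e⌉ : ℚ) / e)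
    (hLrr : Lrr = (c : ℚ) * (Lrc - 1) / ((r : ℚ) - 1))
    (hLcc : Lcc = (r : ℚ) * (Lrc - 1) / ((c : ℚ) - 1))
    (hμ : μ = e * ((r : ℚ) + (c : ℚ) - 2) / ((v : ℚ) - 1))
    (T : Fin r × Fin c → Fin v) (hb : IsBinaryDesign T)
    (hrep : IsEquireplicate T ∨ IsNearEquireplicate T) :
    (lamRC T = Lrc ∧ lamRR T = Lrr ∧ lamCC T = Lcc) ∧
    ∃ G1 G2 G3 G4 : ℚ, 0 ≤ G1 ∧ 0 ≤ G2 ∧ 0 ≤ G3 ∧ 0 ≤ G4 ∧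
      4 * Sfun (v*(v-1)/2) μ + G4
        = 4 * (Sfun (c*(c-1)/2) Lcc + Sfun (r*(r-1)/2) Lrr + Sfun (r*c) Lrc)
          + (G1 + G2 + 2*G3) ∧
      (G1 = 0 ↔ ∀ i j : Fin r, i ≠ j →
        (((rowSet T i ∩ rowSet T j).card : ℤ) = ⌊Lrr⌋ ∨
          ((rowSet T i ∩ rowSet T j).card : ℤ) = ⌈Lrr⌉)) ∧
      (G2 = 0 ↔ ∀ i j : Fin c, i ≠ j →
        (((colSet T i ∩ colSet T j).card : ℤ) = ⌊Lcc⌋ ∨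
          ((colSet T i ∩ colSet T j).card : ℤ) = ⌈Lcc⌉)) ∧
      (G3 = 0 ↔ ∀ (i : Fin r) (j : Fin c),
        (((rowSet T i ∩ colSet T j).card : ℤ) = ⌊Lrc⌋ ∨
          ((rowSet T i ∩ colSet T j).card : ℤ) = ⌈Lrc⌉)) ∧
      (G4 = 0 ↔ ∀ a b : Fin v, a ≠ b →
        ((rowPairCount T a b + colPairCount T a b : ℤ) = ⌊μ⌋ ∨
          (rowPairCount T a b + colPairCount T a b : ℤ) = ⌈μ⌉)) := by
  have hrQ : (2:ℚ) ≤ (r:ℚ) := by exact_mod_cast hr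
  have hcQ : (2:ℚ) ≤ (c:ℚ) := by exact_mod_cast hc
  have hvQ : (2:ℚ) ≤ (v:ℚ) := by exact_mod_cast hv0
  have hrne : (r:ℚ) ≠ 0 := by linarith
  have hcne : (c:ℚ) ≠ 0 := by linarith
  have hvne : (v:ℚ) ≠ 0 := by linarith
  have hr1ne : (r:ℚ) - 1 ≠ 0 := by linarith
  have hc1ne : (c:ℚ) - 1 ≠ 0 := by linarith
  have hv1ne : (v:ℚ) - 1 ≠ 0 := by linarith
  have heval : e = (r:ℚ) * c / v := by rw [he]; rfl
  have hene : e ≠ 0 := by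
    rw [heval]
    exact div_ne_zero (mul_ne_zero hrne hcne) hvne
  set fl : ℚ := (⌊e⌋ : ℚ) with hfl
  set ce : ℚ := (⌈e⌉ : ℚ) with hce
  have hg0 : ∀ s : Fin v, ((replNum T s:ℚ) - fl)*((replNum T s:ℚ) - ce) = 0 := by
    intro s; rw [hfl, hce, he]; exact repl_g_zero T hrep s
  have hsum1 : ∑ s : Fin v, (replNum T s : ℚ) = (r:ℚ)*c := by
    push_cast [← Nat.cast_sum]
    exact_mod_cast congrArg (Nat.cast : ℕ → ℚ) (sum_replNum T)
  have hsum2 : ∑ s : Fin v, (replNum T s : ℚ)^2 = (fl+ce)*((r:ℚ)*c) - (v:ℚ)*(fl*ce) := by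
    have pt : ∀ s ∈ (univ : Finset (Fin v)), (replNum T s:ℚ)^2
        = ((fl+ce)*(replNum T s:ℚ) - fl*ce)
          + ((replNum T s:ℚ) - fl)*((replNum T s:ℚ) - ce) := by
      intro s _; ring
    rw [Finset.sum_congr rfl pt]
    simp only [hg0, add_zero]
    rw [Finset.sum_sub_distrib, ← Finset.mul_sum, hsum1, Finset.sum_const,
      Finset.card_univ, Fintype.card_fin, nsmul_eq_mul]
  have hVRC : ∑ i : Fin r, ∑ j : Fin c, ((rowSet T i ∩ colSet T j).card : ℚ)
      = (fl+ce)*((r:ℚ)*c) - (v:ℚ)*(fl*ce) := (sum_inter_rc T hb).trans hsum2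
  have hVRR : ∑ p ∈ (univ : Finset (Fin r)).offDiag, ((rowSet T p.1 ∩ rowSet T p.2).card : ℚ)
      = (fl+ce)*((r:ℚ)*c) - (v:ℚ)*(fl*ce) - (r:ℚ)*c := by
    rw [sum_inter_rr T hb, Finset.sum_sub_distrib, hsum2, hsum1]
  have hVCC : ∑ p ∈ (univ : Finset (Fin c)).offDiag, ((colSet T p.1 ∩ colSet T p.2).card : ℚ)
      = (fl+ce)*((r:ℚ)*c) - (v:ℚ)*(fl*ce) - (r:ℚ)*c := by
    rw [sum_inter_cc T hb, Finset.sum_sub_distrib, hsum2, hsum1]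
  have hLrcval : (r:ℚ)*c*Lrc = (fl+ce)*((r:ℚ)*c) - (v:ℚ)*(fl*ce) := by
    rw [hLrc, heval]
    field_simp
  have hLrrval : ((r:ℚ)^2 - r)*Lrr = (fl+ce)*((r:ℚ)*c) - (v:ℚ)*(fl*ce) - (r:ℚ)*c := by
    rw [hLrr]
    have : ((r:ℚ)^2 - r) * ((c:ℚ) * (Lrc - 1) / ((r:ℚ) - 1)) = (r:ℚ)*c*(Lrc - 1) := by
      field_simp
    rw [this]
    linear_combination hLrcval
  have hLccval : ((c:ℚ)^2 - c)*Lcc = (fl+ce)*((r:ℚ)*c) - (v:ℚ)*(fl*ce) - (r:ℚ)*c := by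
    rw [hLcc]
    have : ((c:ℚ)^2 - c) * ((r:ℚ) * (Lrc - 1) / ((c:ℚ) - 1)) = (r:ℚ)*c*(Lrc - 1) := by
      field_simp
    rw [this]
    linear_combination hLrcval
  have hμval : ((v:ℚ)^2 - v)*μ = (r:ℚ)*((c:ℚ)^2 - c) + (c:ℚ)*((r:ℚ)^2 - r) := by
    rw [hμ, heval]
    field_simp
    ring
  -- lam equalities
  have hlrc : lamRC T = Lrc := by
    rw [lamRC, hVRC, div_eq_iff (mul_ne_zero hrne hcne)]
    linear_combination -hLrcval
  have hlrr : lamRR T = Lrr := by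
    have hhalf := offDiag_sum_sym
      (fun p : Fin r × Fin r => ((rowSet T p.1 ∩ rowSet T p.2).card : ℚ))
      (fun p => by simp [Finset.inter_comm])
    beta_reduce at hhalf
    rw [hVRR] at hhalf
    rw [lamRR, show ∑ p ∈ univ.filter (fun p : Fin r × Fin r => p.1 < p.2),
        ((rowSet T p.1 ∩ rowSet T p.2).card : ℚ)
        = ((fl+ce)*((r:ℚ)*c) - (v:ℚ)*(fl*ce) - (r:ℚ)*c)/2 from by linarith,
      div_eq_iff (div_ne_zero (mul_ne_zero hrne hr1ne) two_ne_zero)]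
    linear_combination -hLrrval/2
  have hlcc : lamCC T = Lcc := by
    have hhalf := offDiag_sum_sym
      (fun p : Fin c × Fin c => ((colSet T p.1 ∩ colSet T p.2).card : ℚ))
      (fun p => by simp [Finset.inter_comm])
    beta_reduce at hhalf
    rw [hVCC] at hhalf
    rw [lamCC, show ∑ p ∈ univ.filter (fun p : Fin c × Fin c => p.1 < p.2),
        ((colSet T p.1 ∩ colSet T p.2).card : ℚ)
        = ((fl+ce)*((r:ℚ)*c) - (v:ℚ)*(fl*ce) - (r:ℚ)*c)/2 from by linarith,
      div_eq_iff (div_ne_zero (mul_ne_zero hcne hc1ne) two_ne_zero)]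
    linear_combination -hLccval/2
  -- cardinalities
  have hcard_r : (((univ : Finset (Fin r)).offDiag.card : ℕ) : ℚ) = (r:ℚ)^2 - r := by
    rw [Finset.offDiag_card, Finset.card_univ, Fintype.card_fin,
      Nat.cast_sub (Nat.le_mul_of_pos_left r (by omega))]
    push_cast; ring
  have hcard_c : (((univ : Finset (Fin c)).offDiag.card : ℕ) : ℚ) = (c:ℚ)^2 - c := by
    rw [Finset.offDiag_card, Finset.card_univ, Fintype.card_fin,
      Nat.cast_sub (Nat.le_mul_of_pos_left c (by omega))]
    push_cast; ring
  have hcard_v : (((univ : Finset (Fin v)).offDiag.card : ℕ) : ℚ) = (v:ℚ)^2 - v := by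
    rw [Finset.offDiag_card, Finset.card_univ, Fintype.card_fin,
      Nat.cast_sub (Nat.le_mul_of_pos_left v (by omega))]
    push_cast; ring
  have hcard_p : ((univ : Finset (Fin r × Fin c)).card : ℚ) = (r:ℚ)*c := by
    rw [Finset.card_univ, Fintype.card_prod, Fintype.card_fin, Fintype.card_fin]
    push_cast; ring
  -- convexity applications
  have cRR := aux_convex ((univ : Finset (Fin r)).offDiag)
    (fun p => (rowSet T p.1 ∩ rowSet T p.2).card) Lrr
    (by rw [hVRR, hcard_r]; linear_combination -hLrrval)
  have cCC := aux_convex ((univ : Finset (Fin c)).offDiag)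
    (fun p => (colSet T p.1 ∩ colSet T p.2).card) Lcc
    (by rw [hVCC, hcard_c]; linear_combination -hLccval)
  have cRC := aux_convex (univ : Finset (Fin r × Fin c))
    (fun p => (rowSet T p.1 ∩ colSet T p.2).card) Lrc
    (by rw [Fintype.sum_prod_type, hVRC, hcard_p]; linear_combination -hLrcval)
  have cNBG := aux_convex ((univ : Finset (Fin v)).offDiag)
    (fun p => rowPairCount T p.1 p.2 + colPairCount T p.1 p.2) μ
    (by rw [sum_pairCounts T hb, hcard_v]; linear_combination -hμval)
  -- Sfun bridging
  have sR : Sfun ((univ : Finset (Fin r)).offDiag.card) Lrr = 2 * Sfun (r*(r-1)/2) Lrr :=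
    Sfun_double _ _ (by rw [hcard_r, half_card_cast r (by omega)]; ring) _
  have sC : Sfun ((univ : Finset (Fin c)).offDiag.card) Lcc = 2 * Sfun (c*(c-1)/2) Lcc :=
    Sfun_double _ _ (by rw [hcard_c, half_card_cast c (by omega)]; ring) _
  have sV : Sfun ((univ : Finset (Fin v)).offDiag.card) μ = 2 * Sfun (v*(v-1)/2) μ :=
    Sfun_double _ _ (by rw [hcard_v, half_card_cast v (by omega)]; ring) _
  have sP : Sfun ((univ : Finset (Fin r × Fin c)).card) Lrc = Sfun (r*c) Lrc := by
    congr 1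
    rw [Finset.card_univ, Fintype.card_prod, Fintype.card_fin, Fintype.card_fin]
  -- big identity
  have BIG := big_identity T
  rw [show (2:ℚ) * ∑ i : Fin r, ∑ j : Fin c,
      (((rowSet T i ∩ colSet T j).card : ℚ)^2 - ((rowSet T i ∩ colSet T j).card : ℚ))
      = 2 * ∑ p ∈ (univ : Finset (Fin r × Fin c)),
        (((rowSet T p.1 ∩ colSet T p.2).card : ℚ)^2 - ((rowSet T p.1 ∩ colSet T p.2).card : ℚ))
      from by rw [Fintype.sum_prod_type]] at BIG
  rw [cRR, cCC, cRC, cNBG, sR, sC, sV, sP] at BIG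
  refine ⟨⟨hlrc, hlrr, hlcc⟩,
    ∑ p ∈ (univ : Finset (Fin r)).offDiag,
      (((rowSet T p.1 ∩ rowSet T p.2).card : ℚ) - (⌊Lrr⌋:ℚ)) *
      (((rowSet T p.1 ∩ rowSet T p.2).card : ℚ) - (⌈Lrr⌉:ℚ)),
    ∑ p ∈ (univ : Finset (Fin c)).offDiag,
      (((colSet T p.1 ∩ colSet T p.2).card : ℚ) - (⌊Lcc⌋:ℚ)) *
      (((colSet T p.1 ∩ colSet T p.2).card : ℚ) - (⌈Lcc⌉:ℚ)),
    ∑ p ∈ (univ : Finset (Fin r × Fin c)),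
      (((rowSet T p.1 ∩ colSet T p.2).card : ℚ) - (⌊Lrc⌋:ℚ)) *
      (((rowSet T p.1 ∩ colSet T p.2).card : ℚ) - (⌈Lrc⌉:ℚ)),
    ∑ p ∈ (univ : Finset (Fin v)).offDiag,
      (((rowPairCount T p.1 p.2 + colPairCount T p.1 p.2 : ℕ) : ℚ) - (⌊μ⌋:ℚ)) *
      (((rowPairCount T p.1 p.2 + colPairCount T p.1 p.2 : ℕ) : ℚ) - (⌈μ⌉:ℚ)),
    Finset.sum_nonneg (fun p _ => aux_g_nonneg _ _),
    Finset.sum_nonneg (fun p _ => aux_g_nonneg _ _),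
    Finset.sum_nonneg (fun p _ => aux_g_nonneg _ _),
    Finset.sum_nonneg (fun p _ => aux_g_nonneg _ _),
    by linarith [BIG], ?_, ?_, ?_, ?_⟩
  · rw [Finset.sum_eq_zero_iff_of_nonneg (fun p _ => aux_g_nonneg _ _)]
    constructor
    · intro h i j hij
      exact (aux_g_zero_iff _ _).1 (h (i,j) (by simp [Finset.mem_offDiag, hij]))
    · intro h p hp
      rw [Finset.mem_offDiag] at hp
      exact (aux_g_zero_iff _ _).2 (h p.1 p.2 hp.2.2)
  · rw [Finset.sum_eq_zero_iff_of_nonneg (fun p _ => aux_g_nonneg _ _)]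
    constructor
    · intro h i j hij
      exact (aux_g_zero_iff _ _).1 (h (i,j) (by simp [Finset.mem_offDiag, hij]))
    · intro h p hp
      rw [Finset.mem_offDiag] at hp
      exact (aux_g_zero_iff _ _).2 (h p.1 p.2 hp.2.2)
  · rw [Finset.sum_eq_zero_iff_of_nonneg (fun p _ => aux_g_nonneg _ _)]
    constructor
    · intro h i j
      exact (aux_g_zero_iff _ _).1 (h (i,j) (Finset.mem_univ _))
    · intro h p _
      exact (aux_g_zero_iff _ _).2 (h p.1 p.2)
  · rw [Finset.sum_eq_zero_iff_of_nonneg (fun p _ => aux_g_nonneg _ _)]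
    constructor
    · intro h a b hab
      exact (aux_g_zero_iff _ _).1 (h (a,b) (by simp [Finset.mem_offDiag, hab]))
    · intro h p hp
      rw [Finset.mem_offDiag] at hp
      exact (aux_g_zero_iff _ _).2 (h p.1 p.2 hp.2.2)

end Aux6

/-- Duality between near triple arrays and near balanced grids via
the quantities `S_NTA` and `S_NBG`. -/
theorem nearTripleArray_nearBalancedGrid_duality {r c v : ℕ}
    (hr : 2 ≤ r) (hc : 2 ≤ c) (hv0 : 2 ≤ v)
    (hv1 : max r c ≤ v) (hv2 : v ≤ r * c)
    (e Lrc Lrr Lcc μ SNTA SNBG : ℚ)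
    (he : e = avgRepl r c v)
    (hLrc : Lrc = (⌊e⌋ : ℚ) + (⌈e⌉ : ℚ) - (⌊e⌋ : ℚ) * (⌈e⌉ : ℚ) / e)
    (hLrr : Lrr = (c : ℚ) * (Lrc - 1) / ((r : ℚ) - 1))
    (hLcc : Lcc = (r : ℚ) * (Lrc - 1) / ((c : ℚ) - 1))
    (hμ : μ = e * ((r : ℚ) + (c : ℚ) - 2) / ((v : ℚ) - 1))
    (hSNTA : SNTA = Sfun (c * (c - 1) / 2) Lcc + Sfun (r * (r - 1) / 2) Lrr
        + Sfun (r * c) Lrc)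
    (hSNBG : SNBG = Sfun (v * (v - 1) / 2) μ) :
    (SNTA < SNBG → ¬ ∃ T : Fin r × Fin c → Fin v, IsNearTripleArray T) ∧
    (SNBG < SNTA → ¬ ∃ T : Fin r × Fin c → Fin v, IsNearBalancedGrid T) ∧
    (SNTA = SNBG → ∀ T : Fin r × Fin c → Fin v,
      (IsNearTripleArray T ↔ IsNearBalancedGrid T)) := by
  have hμeq : μ = muGrid r c v := by rw [hμ, he]; rfl
  subst hSNTA hSNBG
  refine ⟨?_, ?_, ?_⟩
  · rintro hlt ⟨T, hb, hrep, h3, h4, h5⟩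
    obtain ⟨⟨hlrc, hlrr, hlcc⟩, G1, G2, G3, G4, hG1, hG2, hG3, hG4, hmaster, i1, i2, i3, i4⟩ :=
      main_key hr hc hv0 e Lrc Lrr Lcc μ he hLrc hLrr hLcc hμ T hb hrep
    have e1 : G1 = 0 := i1.2 (fun i j hij => by rw [← hlrr]; exact h4 i j hij)
    have e2 : G2 = 0 := i2.2 (fun i j hij => by rw [← hlcc]; exact h5 i j hij)
    have e3 : G3 = 0 := i3.2 (fun i j => by rw [← hlrc]; exact h3 i j)
    rw [e1, e2, e3] at hmaster
    linarith
  · rintro hlt ⟨T, hb, hrep, hcond⟩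
    obtain ⟨⟨hlrc, hlrr, hlcc⟩, G1, G2, G3, G4, hG1, hG2, hG3, hG4, hmaster, i1, i2, i3, i4⟩ :=
      main_key hr hc hv0 e Lrc Lrr Lcc μ he hLrc hLrr hLcc hμ T hb hrep
    have e4 : G4 = 0 := i4.2 (fun a b hab => by rw [hμeq]; exact hcond a b hab)
    rw [e4] at hmaster
    linarith
  · intro heq T
    constructor
    · rintro ⟨hb, hrep, h3, h4, h5⟩
      obtain ⟨⟨hlrc, hlrr, hlcc⟩, G1, G2, G3, G4, hG1, hG2, hG3, hG4, hmaster, i1, i2, i3, i4⟩ :=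
        main_key hr hc hv0 e Lrc Lrr Lcc μ he hLrc hLrr hLcc hμ T hb hrep
      have e1 : G1 = 0 := i1.2 (fun i j hij => by rw [← hlrr]; exact h4 i j hij)
      have e2 : G2 = 0 := i2.2 (fun i j hij => by rw [← hlcc]; exact h5 i j hij)
      have e3 : G3 = 0 := i3.2 (fun i j => by rw [← hlrc]; exact h3 i j)
      have e4 : G4 = 0 := by linarith
      exact ⟨hb, hrep, fun a b hab => by rw [← hμeq]; exact i4.1 e4 a b hab⟩
    · rintro ⟨hb, hrep, hcond⟩
      obtain ⟨⟨hlrc, hlrr, hlcc⟩, G1, G2, G3, G4, hG1, hG2, hG3, hG4, hmaster, i1, i2, i3, i4⟩ :=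
        main_key hr hc hv0 e Lrc Lrr Lcc μ he hLrc hLrr hLcc hμ T hb hrep
      have e4 : G4 = 0 := i4.2 (fun a b hab => by rw [hμeq]; exact hcond a b hab)
      have e1 : G1 = 0 := by linarith
      have e2 : G2 = 0 := by linarith
      have e3 : G3 = 0 := by linarith
      exact ⟨hb, hrep,
        fun i j => by rw [hlrc]; exact i3.1 e3 i j,
        fun i j hij => by rw [hlrr]; exact i1.1 e1 i j hij,
        fun i j hij => by rw [hlcc]; exact i2.1 e2 i j hij⟩
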